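/- The function D(β) := 16(β+1)(β²+3β+3) / ((β+2)(β²+6β+12)) is strictly increasing on (0,∞), with lim_{β→0+} D(β) = 2 and lim_{β→∞} D(β) = 16. -/
import Mathlib


open Real Filter

/-- The limiting determinant gain from doubling the design interval:
`D(β) = 16(β+1)(β²+3β+3)/((β+2)(β²+6β+12))`. -/
noncomputable def Dlim (β : ℝ) : ℝ :=
  16 * (β + 1) * (β ^ 2 + 3 * β + 3) / ((β + 2) * (β ^ 2 + 6 * β + 12))

lemma Dlim_denom_pos {β : ℝ} (hβ : 0 < β) : 0 < (β + 2) * (β ^ 2 + 6 * β + 12) := by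
  nlinarith

/-- `D(β)` is strictly increasing on `(0,∞)` with `D(β) → 2` as `β → 0+` and
`D(β) → 16` as `β → ∞`. -/
theorem Dlim_properties :
    StrictMonoOn Dlim (Set.Ioi (0 : ℝ)) ∧
    Tendsto Dlim (nhdsWithin 0 (Set.Ioi 0)) (nhds 2) ∧
    Tendsto Dlim atTop (nhds 16) := by
  refine ⟨?_, ?_, ?_⟩
  · intro a ha b hb hab
    simp only [Set.mem_Ioi] at ha hb
    have hqa := Dlim_denom_pos ha
    have hqb := Dlim_denom_pos hb
    unfold Dlim
    rw [div_lt_div_iff₀ hqa hqb]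
    nlinarith [mul_pos ha hb, sq_nonneg (a*b), sq_nonneg (a-b), sq_nonneg (a+b),
      mul_pos (mul_pos ha hb) (sub_pos.mpr hab), sq_nonneg (a*b - 1),
      mul_pos ha (sub_pos.mpr hab), mul_pos hb (sub_pos.mpr hab),
      mul_pos (mul_pos ha ha) (sub_pos.mpr hab),
      mul_pos (mul_pos hb hb) (sub_pos.mpr hab),
      mul_pos (mul_pos (mul_pos ha hb) hb) (sub_pos.mpr hab),
      mul_pos (mul_pos (mul_pos ha hb) ha) (sub_pos.mpr hab)]
  · have hc : ContinuousAt Dlim 0 := by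
      apply ContinuousAt.div
      · fun_prop
      · fun_prop
      · norm_num
    have : Dlim 0 = 2 := by norm_num [Dlim]
    exact tendsto_nhdsWithin_of_tendsto_nhds (this ▸ hc.tendsto)
  · have hF : ContinuousAt (fun t : ℝ => 16 * (1 + t) * (1 + 3*t + 3*t^2) /
        ((1 + 2*t) * (1 + 6*t + 12*t^2))) 0 := by
      apply ContinuousAt.div
      · fun_prop
      · fun_prop
      · norm_num
    have h1 : Tendsto (fun β : ℝ => 1/β) atTop (nhds (0:ℝ)) := by
      simpa using tendsto_inv_atTop_zero (𝕜 := ℝ)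
    have key := hF.tendsto.comp h1
    norm_num at key
    apply key.congr'
    filter_upwards [eventually_gt_atTop (0:ℝ)] with β hβ
    show 16 * (1 + β⁻¹) * (1 + 3*β⁻¹ + 3*(β⁻¹)^2) /
        ((1 + 2*β⁻¹) * (1 + 6*β⁻¹ + 12*(β⁻¹)^2)) = Dlim β
    unfold Dlim
    rw [div_eq_div_iff]
    · field_simp
    · have hp1 : 0 < 1 + 2*β⁻¹ := by positivity
      have hp2 : 0 < 1 + 6*β⁻¹ + 12*(β⁻¹)^2 := by positivity
      exact (mul_pos hp1 hp2).ne'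
    · exact (Dlim_denom_pos hβ).ne'
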